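/- arXiv:2308.08440 — 8 statements merged into one kernel-verified Lean document; each statement's English description precedes it below -/
import Mathlib

section
/- Let K be a group and let U ⊆ K. Suppose there is a subset V ⊆ K such that V⁻¹V ⊆ U and V is n-generic in K for some integer n ≥ 1. Then for any group G and any group homomorphism τ : G → K, the set τ⁻¹(U) is n-generic in G. -/
open scoped Pointwise Matrix.Norms.L2Operator

/-- A left-invariant finitely additive probability measure on a group `G`. -/
structure LeftInvariantFAMeasure (G : Type*) [Group G] where
  toFun : Set G → ℝ
  nonneg : ∀ X : Set G, 0 ≤ toFun X
  total : toFun Set.univ = 1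
  additive : ∀ X Y : Set G, Disjoint X Y → toFun (X ∪ Y) = toFun X + toFun Y
  left_invariant : ∀ (g : G) (X : Set G), toFun (g • X) = toFun X

/-- The distance on the unitary group `U(n)` induced by the `ℓ²` operator norm. -/
noncomputable def uDist {n : ℕ} (x y : Matrix.unitaryGroup (Fin n) ℂ) : ℝ :=
  ‖(x : Matrix (Fin n) (Fin n) ℂ) - (y : Matrix (Fin n) (Fin n) ℂ)‖

/-- A subset `A` of a group `G` is `m`-generic if `G` is covered by at most `m`
left translates of `A`. -/
def IsGeneric {G : Type*} [Group G] (m : ℕ) (A : Set G) : Prop :=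
  ∃ F : Finset G, F.card ≤ m ∧ ∀ x : G, ∃ g ∈ F, x ∈ g • A

/-!
Choose in each translate `kV` that meets `τ(G)` a point `τ(g_k)`. Any two points of `kV` differ
by an element of `V⁻¹V`, so the `g_k τ⁻¹(V⁻¹V)` cover `G`: there are at most `n` of them.
-/

theorem IsGeneric.mono {G : Type*} [Group G] {m : ℕ} {A B : Set G} (hAB : A ⊆ B)
    (hA : IsGeneric m A) : IsGeneric m B := by
  obtain ⟨F, hF, hcov⟩ := hA
  refine ⟨F, hF, fun x => ?_⟩
  obtain ⟨g, hg, hx⟩ := hcov x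
  exact ⟨g, hg, Set.smul_set_mono hAB hx⟩

theorem inv_mul_mem_inv_mul_of_mem_smul {K : Type*} [Group K] {V : Set K} {k a b : K}
    (ha : a ∈ k • V) (hb : b ∈ k • V) : a⁻¹ * b ∈ V⁻¹ * V := by
  obtain ⟨v, hv, rfl⟩ := ha
  obtain ⟨w, hw, rfl⟩ := hb
  have hvw : (k • v)⁻¹ * k • w = v⁻¹ * w := by simp [smul_eq_mul, mul_assoc]
  exact hvw ▸ Set.mul_mem_mul (Set.inv_mem_inv.mpr hv) hw

theorem IsGeneric.preimage_inv_mul {K G : Type*} [Group K] [Group G] {n : ℕ} {V : Set K}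
    (hV : IsGeneric n V) (τ : G →* K) : IsGeneric n (τ ⁻¹' (V⁻¹ * V)) := by
  classical
  obtain ⟨F, hF, hcov⟩ := hV
  let pick (k : K) : G := Classical.epsilon fun g => τ g ∈ k • V
  refine ⟨F.image pick, Finset.card_image_le.trans hF, fun x => ?_⟩
  obtain ⟨k, hk, hx⟩ := hcov (τ x)
  have hpick : τ (pick k) ∈ k • V := Classical.epsilon_spec (p := fun g => τ g ∈ k • V) ⟨x, hx⟩
  refine ⟨pick k, Finset.mem_image_of_mem pick hk, Set.mem_smul_set_iff_inv_smul_mem.mpr ?_⟩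
  simpa [smul_eq_mul] using inv_mul_mem_inv_mul_of_mem_smul hpick hx

theorem preimage_isGeneric_general {K : Type*} [Group K] (U V : Set K) (n : ℕ)
    (hV : V⁻¹ * V ⊆ U) (hgen : IsGeneric n V)
    {G : Type*} [Group G] (τ : G →* K) :
    IsGeneric n (τ ⁻¹' U) :=
  (hgen.preimage_inv_mul τ).mono (Set.preimage_mono hV)

/-- If `V⁻¹V ⊆ U` and `V` is `n`-generic in `K`, then for any homomorphism
`τ : G → K` the pullback `τ⁻¹(U)` is `n`-generic in `G`. -/
theorem preimage_isGeneric {K : Type*} [Group K] (U V : Set K) (n : ℕ) (hn : 1 ≤ n)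
    (hV : V⁻¹ * V ⊆ U) (hgen : IsGeneric n V)
    {G : Type*} [Group G] (τ : G →* K) :
    IsGeneric n (τ ⁻¹' U) :=
  preimage_isGeneric_general U V n hV hgen τ
end

section
/- Fix an integer r ≥ 1 and let γ_r = |e^{2πi/r} − 1| be the complex distance between e^{2πi/r} and 1. Let G be a group of exponent r (i.e. gʳ = 1 for all g ∈ G), let n ≥ 1, let τ : G → U(n) be a group homomorphism, and let 0 < δ ≤ γ_r. Then the (δ,U(n))-Bohr neighborhood B = τ⁻¹({u ∈ U(n) : d(u,1) < δ}) equals the kernel of τ; in particular B is a normal subgroup of G. -/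
open scoped Pointwise Matrix.Norms.L2Operator

/-! If `u = τ g ≠ 1`, then `u ^ r = 1` and, `u` being normal, its spectrum cannot be `{1}`: it
contains an `r`-th root of unity `z ≠ 1`. The spectral radius bound gives `|z - 1| ≤ ‖u - 1‖`,
and concavity of `sin` on `[0, π]` shows that no nontrivial `r`-th root of unity is closer to `1`
than `e^{2πi/r}`. Hence `d(u, 1) ≥ γ_r ≥ δ`. -/

open Complex Real

theorem sin_pi_div_le_sin_pi_mul_div {r k : ℕ} (hk : 0 < k) (hkr : k < r) :
    Real.sin (π / r) ≤ Real.sin (π * k / r) := by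
  have hr : (0 : ℝ) < r := by exact_mod_cast hk.trans hkr
  have hk1 : (1 : ℝ) ≤ k := by exact_mod_cast hk
  have hkr1 : (k : ℝ) + 1 ≤ r := by exact_mod_cast hkr
  have hmem : π * k / r ∈ Set.Icc (π / r) (π - π / r) := by
    constructor
    · gcongr; nlinarith [pi_pos]
    · rw [le_sub_iff_add_le, ← add_div, div_le_iff₀ hr]; nlinarith [pi_pos]
  have hle : π / r ≤ π := div_le_self pi_pos.le (by linarith)
  have hmin := strictConcaveOn_sin_Icc.concaveOn.min_le_of_mem_Icc
    ⟨by positivity, hle⟩ ⟨by linarith, by linarith [div_nonneg pi_pos.le hr.le]⟩ hmem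
  rwa [Real.sin_pi_sub, min_self] at hmin

theorem norm_exp_two_pi_I_div_pow_sub_one (r k : ℕ) :
    ‖exp (2 * π * I / r) ^ k - 1‖ = |2 * Real.sin (π * k / r)| := by
  rw [← Complex.exp_nat_mul, show (k : ℂ) * (2 * π * I / r) = I * ((2 * π * k / r : ℝ) : ℂ) by
    push_cast; ring, norm_exp_I_mul_ofReal_sub_one, Real.norm_eq_abs]
  ring_nf

theorem norm_exp_two_pi_I_div_sub_one_le_of_pow_eq_one {r : ℕ} {z : ℂ} (hz : z ^ r = 1)
    (hz1 : z ≠ 1) :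
    ‖exp (2 * π * I / r) - 1‖ ≤ ‖z - 1‖ := by
  rcases Nat.eq_zero_or_pos r with rfl | hr
  · -- `2πi / 0 = 0`, so the left-hand side vanishes
    simp
  have : NeZero r := ⟨hr.ne'⟩
  obtain ⟨k, hkr, rfl⟩ := (isPrimitiveRoot_exp r hr.ne').eq_pow_of_pow_eq_one hz
  have hk : 0 < k := Nat.pos_of_ne_zero (by rintro rfl; exact hz1 (pow_zero _))
  have h1 := norm_exp_two_pi_I_div_pow_sub_one r 1
  rw [pow_one, Nat.cast_one, mul_one] at h1
  have hsin := sin_pi_div_le_sin_pi_mul_div hk hkr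
  have hsin0 : 0 ≤ Real.sin (π / r) :=
    Real.sin_nonneg_of_nonneg_of_le_pi (by positivity) (div_le_self pi_pos.le (by simpa))
  rw [h1, norm_exp_two_pi_I_div_pow_sub_one, abs_of_nonneg (by positivity),
    abs_of_nonneg (by linarith)]
  linarith

theorem IsStarNormal.norm_exp_two_pi_I_div_sub_one_le_of_pow_eq_one {A : Type*}
    [CStarAlgebra A] {a : A} [IsStarNormal a] {r : ℕ} (har : a ^ r = 1) (ha : a ≠ 1) :
    ‖exp (2 * π * I / r) - 1‖ ≤ ‖a - 1‖ := by
  nontriviality A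
  obtain ⟨z, hz, hz1⟩ : ∃ z ∈ spectrum ℂ a, z ≠ 1 := by
    by_contra! h
    exact ha (CFC.eq_one_of_spectrum_subset_one a h)
  have hzr : z ^ r = 1 := by
    simpa [har, spectrum.one_eq] using spectrum.pow_mem_pow a r hz
  have hz_sub : z - 1 ∈ spectrum ℂ (a - 1) := by
    have h := spectrum.sub_singleton_eq a (1 : ℂ)
    rw [map_one] at h
    exact h ▸ Set.sub_mem_sub hz rfl
  calc ‖exp (2 * π * I / r) - 1‖ ≤ ‖z - 1‖ :=
      _root_.norm_exp_two_pi_I_div_sub_one_le_of_pow_eq_one hzr hz1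
    _ ≤ ‖a - 1‖ := spectrum.norm_le_norm_of_mem hz_sub

theorem bohr_eq_ker_of_exponent_general (r : ℕ) {G : Type*} [Group G]
    (hexp : ∀ g : G, g ^ r = 1) (n : ℕ)
    (τ : G →* Matrix.unitaryGroup (Fin n) ℂ) (δ : ℝ) (hδ : 0 < δ)
    (hδr : δ ≤ ‖Complex.exp (2 * (Real.pi : ℂ) * Complex.I / (r : ℂ)) - 1‖) :
    τ ⁻¹' {u | uDist u 1 < δ} = (τ.ker : Set G) ∧
      ∃ H : Subgroup G, H.Normal ∧ (H : Set G) = τ ⁻¹' {u | uDist u 1 < δ} := by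
  have hker : τ ⁻¹' {u | uDist u 1 < δ} = (τ.ker : Set G) := by
    ext g
    refine ⟨fun hg => ?_, fun hg => by simpa [uDist, τ.mem_ker.mp hg] using hδ⟩
    by_contra hg_ker
    have hpow : (τ g : Matrix (Fin n) (Fin n) ℂ) ^ r = 1 := by
      rw [← SubmonoidClass.coe_pow, ← map_pow, hexp, map_one, OneMemClass.coe_one]
    have hne : (τ g : Matrix (Fin n) (Fin n) ℂ) ≠ 1 := fun h => hg_ker (Subtype.ext h)
    have := IsStarNormal.norm_exp_two_pi_I_div_sub_one_le_of_pow_eq_one hpow hne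
    exact absurd hg (not_lt.mpr (hδr.trans this))
  exact ⟨hker, τ.ker, inferInstance, hker.symm⟩

/-- In a group of exponent `r`, a `(δ,U(n))`-Bohr neighborhood with
`δ ≤ |e^{2πi/r} - 1|` equals the kernel of the defining homomorphism,
and in particular is a normal subgroup. -/
theorem bohr_eq_ker_of_exponent (r : ℕ) (hr : 1 ≤ r) {G : Type*} [Group G]
    (hexp : ∀ g : G, g ^ r = 1) (n : ℕ) (hn : 1 ≤ n)
    (τ : G →* Matrix.unitaryGroup (Fin n) ℂ) (δ : ℝ) (hδ : 0 < δ)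
    (hδr : δ ≤ ‖Complex.exp (2 * (Real.pi : ℂ) * Complex.I / (r : ℂ)) - 1‖) :
    τ ⁻¹' {u | uDist u 1 < δ} = (τ.ker : Set G) ∧
      ∃ H : Subgroup G, H.Normal ∧ (H : Set G) = τ ⁻¹' {u | uDist u 1 < δ} :=
  bohr_eq_ker_of_exponent_general r hexp n τ δ hδ hδr
end

section
/- Let K be a Hausdorff topological group and suppose K contains an abelian subgroup A of finite index (A need not be closed). Then the connected component of the identity in K is abelian, i.e. any two elements of the identity component commute. -/
/-! The closure of `A` is still abelian (commuting is a closed condition in a Hausdorff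
group) and still has finite index; a closed subgroup of finite index is open, hence clopen,
so it contains the identity component. -/

theorem Submonoid.mul_comm_of_mem_topologicalClosure {M : Type*} [Monoid M] [TopologicalSpace M]
    [ContinuousMul M] [T2Space M] {S : Submonoid M} (hS : ∀ x ∈ S, ∀ y ∈ S, x * y = y * x)
    {x y : M} (hx : x ∈ S.topologicalClosure) (hy : y ∈ S.topologicalClosure) :
    x * y = y * x :=
  letI := S.commMonoidTopologicalClosure fun a b ↦ Subtype.ext (hS a a.2 b b.2)
  congrArg Subtype.val (mul_comm (⟨x, hx⟩ : S.topologicalClosure) ⟨y, hy⟩)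

theorem Subgroup.connectedComponent_one_subset_of_isOpen {G : Type*} [Group G]
    [TopologicalSpace G] [IsTopologicalGroup G] {H : Subgroup G} (hH : IsOpen (H : Set G)) :
    connectedComponent (1 : G) ⊆ H :=
  IsClopen.connectedComponent_subset ⟨H.isClosed_of_isOpen hH, hH⟩ H.one_mem

/-- If a Hausdorff topological group contains an abelian subgroup of finite index,
then its identity component is abelian. -/
theorem identityComponent_abelian_of_finiteIndex_abelian_subgroup
    {K : Type*} [Group K] [TopologicalSpace K] [IsTopologicalGroup K] [T2Space K]
    (A : Subgroup K) (hfin : A.index ≠ 0)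
    (hab : ∀ x ∈ A, ∀ y ∈ A, x * y = y * x) :
    ∀ x ∈ connectedComponent (1 : K), ∀ y ∈ connectedComponent (1 : K),
      x * y = y * x := by
  have : A.FiniteIndex := ⟨hfin⟩
  have : A.topologicalClosure.FiniteIndex :=
    Subgroup.finiteIndex_of_le A.le_topologicalClosure
  have hopen : IsOpen (A.topologicalClosure : Set K) :=
    A.topologicalClosure.isOpen_of_isClosed_of_finiteIndex A.isClosed_topologicalClosure
  intro x hx y hy
  exact A.toSubmonoid.mul_comm_of_mem_topologicalClosure hab
    (Subgroup.connectedComponent_one_subset_of_isOpen hopen hx)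
    (Subgroup.connectedComponent_one_subset_of_isOpen hopen hy)
end

section
/- Let K be a compact Hausdorff topological group with Haar probability measure μ on its Borel σ-algebra. Suppose X ⊆ K is a Borel set with μ(X) > 0 such that for every x ∈ X the centralizer C(x) = {y ∈ K : xy = yx} satisfies μ(C(x)) > 0. Then the connected component of the identity in K is abelian, i.e. any two elements of the identity component commute. -/
/-!
By Steinhaus' theorem a measurable subgroup of positive Haar measure contains a neighbourhood
of `1`, so it is open, hence clopen, hence contains the identity component `K₀`. Applied to the
closed subgroups `C(x)`, `x ∈ X`, this shows that `X` centralizes `K₀`; so the centralizer of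
`K₀` has positive measure, and applying the same fact once more it contains `K₀`.
-/

open MeasureTheory

section HaarPositive

variable {G : Type*} [Group G] [TopologicalSpace G] [IsTopologicalGroup G]
  [LocallyCompactSpace G] [MeasurableSpace G] [BorelSpace G]
  (μ : Measure G) [μ.IsHaarMeasure] [μ.InnerRegular]

theorem Subgroup.isOpen_of_haar_pos (H : Subgroup G) (hH : MeasurableSet (H : Set G))
    (hpos : 0 < μ H) : IsOpen (H : Set G) := by
  refine H.isOpen_of_mem_nhds
    (Filter.mem_of_superset (μ.div_mem_nhds_one_of_haar_pos _ hH hpos) ?_)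
  rintro _ ⟨a, ha, b, hb, rfl⟩
  exact H.div_mem ha hb

theorem Subgroup.connectedComponent_one_subset_of_haar_pos (H : Subgroup G)
    (hH : MeasurableSet (H : Set G)) (hpos : 0 < μ H) :
    connectedComponent (1 : G) ⊆ H :=
  have hopen := H.isOpen_of_haar_pos μ hH hpos
  IsClopen.connectedComponent_subset ⟨H.isClosed_of_isOpen hopen, hopen⟩ H.one_mem

theorem connectedComponent_one_subset_centralizer_of_haar_pos [T2Space G] (S : Set G)
    (hS : 0 < μ (Set.centralizer S)) :
    connectedComponent (1 : G) ⊆ Set.centralizer S :=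
  (Subgroup.centralizer S).connectedComponent_one_subset_of_haar_pos μ
    (Set.isClosed_centralizer S).measurableSet hS

end HaarPositive

theorem identityComponent_abelian_of_positive_measure_centralizers_general
    {K : Type*} [Group K] [TopologicalSpace K] [IsTopologicalGroup K]
    [CompactSpace K] [T2Space K] [MeasurableSpace K] [BorelSpace K]
    (μ : Measure K) [μ.IsHaarMeasure]
    (X : Set K) (hXpos : 0 < μ X)
    (hcent : ∀ x ∈ X, 0 < μ {y : K | x * y = y * x}) :
    ∀ x ∈ connectedComponent (1 : K), ∀ y ∈ connectedComponent (1 : K),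
      x * y = y * x := by
  have hX : X ⊆ Set.centralizer (connectedComponent (1 : K)) := fun x hx y hy =>
    (connectedComponent_one_subset_centralizer_of_haar_pos μ {x}
      (by simpa [Set.centralizer] using hcent x hx) hy x rfl).symm
  intro x hx y hy
  exact connectedComponent_one_subset_centralizer_of_haar_pos μ _
    (hXpos.trans_le (measure_mono hX)) hy x hx

/-- If a compact Hausdorff group has a positive-measure Borel set of elements whose
centralizers have positive Haar measure, then its identity component is abelian. -/
theorem identityComponent_abelian_of_positive_measure_centralizers
    {K : Type*} [Group K] [TopologicalSpace K] [IsTopologicalGroup K]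
    [CompactSpace K] [T2Space K] [MeasurableSpace K] [BorelSpace K]
    (μ : Measure K) [μ.IsHaarMeasure] [IsProbabilityMeasure μ]
    (X : Set K) (hXmeas : MeasurableSet X) (hXpos : 0 < μ X)
    (hcent : ∀ x ∈ X, 0 < μ {y : K | x * y = y * x}) :
    ∀ x ∈ connectedComponent (1 : K), ∀ y ∈ connectedComponent (1 : K),
      x * y = y * x :=
  identityComponent_abelian_of_positive_measure_centralizers_general μ X hXpos hcent
end

section
/- Let G be a group such that every normal subgroup of G of finite index equals G. Let K be a compact Hausdorff topological group and let τ : G → K be a group homomorphism whose image is dense in K. Then K is connected. -/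
/-!
Every open normal subgroup `H` of the compact group `K` has finite index, so its preimage under
`τ` is a normal subgroup of finite index of `G`, hence all of `G`. Thus `H` contains the dense
image of `τ`; being open, it is also closed, so `H = K`. In a compact group every clopen
neighbourhood of `1` contains an open normal subgroup, so the only clopen set containing `1` is
`K`, and translating shows that `K` is connected.
-/

lemma Subgroup.index_comap_ne_zero {G K : Type*} [Group G] [Group K] (f : G →* K)
    {H : Subgroup K} (hH : H.index ≠ 0) : (H.comap f).index ≠ 0 := by
  simpa [Subgroup.relIndex_top_right] using
    Subgroup.relIndex_comap_ne_zero f (J := H) (K := ⊤) (by simpa using hH)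

lemma Subgroup.eq_top_of_isClosed_of_range_le {G K : Type*} [Group G] [Group K]
    [TopologicalSpace K] {f : G →* K} (hf : DenseRange f) {H : Subgroup K}
    (hH : IsClosed (H : Set K)) (hfH : f.range ≤ H) : H = ⊤ := by
  have hrange : Set.range f ⊆ H := by simpa [← MonoidHom.coe_range] using hfH
  rw [← Subgroup.coe_eq_univ, ← Set.univ_subset_iff, ← hf.closure_range]
  exact hH.closure_subset_iff.mpr hrange

lemma IsTopologicalGroup.connectedSpace_of_forall_openNormalSubgroup_eq_top {K : Type*}
    [Group K] [TopologicalSpace K] [IsTopologicalGroup K] [CompactSpace K]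
    (hK : ∀ H : OpenNormalSubgroup K, H.toSubgroup = ⊤) : ConnectedSpace K := by
  have clopen_of_one_mem : ∀ W : Set K, IsClopen W → (1 : K) ∈ W → W = Set.univ := by
    intro W hW hW1
    obtain ⟨H, hHW⟩ := exist_openNormalSubgroup_sub_clopen_nhds_of_one hW hW1
    rw [← Set.univ_subset_iff, ← Subgroup.coe_top, ← hK H]
    exact hHW
  refine connectedSpace_iff_clopen.mpr ⟨⟨1⟩, fun s hs => ?_⟩
  rcases s.eq_empty_or_nonempty with hs_empty | ⟨x, hx⟩
  · exact .inl hs_empty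
  · have htranslate : (x * ·) ⁻¹' s = Set.univ :=
      clopen_of_one_mem _ (hs.preimage (continuous_const_mul x)) (by simpa using hx)
    refine .inr (Set.eq_univ_of_forall fun y => ?_)
    simpa using Set.eq_univ_iff_forall.mp htranslate (x⁻¹ * y)

theorem compactification_connected_of_no_finiteIndex_general
    {G : Type*} [Group G]
    (hG : ∀ N : Subgroup G, N.Normal → N.index ≠ 0 → N = ⊤)
    {K : Type*} [Group K] [TopologicalSpace K] [IsTopologicalGroup K]
    [CompactSpace K]
    (τ : G →* K) (hdense : DenseRange τ) :
    ConnectedSpace K := by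
  refine IsTopologicalGroup.connectedSpace_of_forall_openNormalSubgroup_eq_top fun H => ?_
  have hH : H.toSubgroup.FiniteIndex := H.toOpenSubgroup.finiteIndex_of_finite_quotient
  have hcomap : H.toSubgroup.comap τ = ⊤ :=
    hG _ (H.isNormal'.comap τ) (Subgroup.index_comap_ne_zero τ hH.index_ne_zero)
  refine Subgroup.eq_top_of_isClosed_of_range_le hdense H.toOpenSubgroup.isClosed ?_
  rw [MonoidHom.range_eq_map, Subgroup.map_le_iff_le_comap, hcomap]

/-- If `G` has no proper normal subgroup of finite index, then any compact Hausdorff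
group admitting a homomorphism from `G` with dense image is connected. -/
theorem compactification_connected_of_no_finiteIndex
    {G : Type*} [Group G]
    (hG : ∀ N : Subgroup G, N.Normal → N.index ≠ 0 → N = ⊤)
    {K : Type*} [Group K] [TopologicalSpace K] [IsTopologicalGroup K]
    [CompactSpace K] [T2Space K]
    (τ : G →* K) (hdense : DenseRange τ) :
    ConnectedSpace K :=
  compactification_connected_of_no_finiteIndex_general hG τ hdense
end

section
/- Let G be a group carrying a left-invariant finitely additive probability measure μ. Suppose U, V, W ⊆ G are such that 1 ∈ U, U = U⁻¹, and U² ⊆ V. If μ(V \ W) < μ(U)/2, then U ⊆ WW⁻¹. -/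
open scoped Pointwise Matrix.Norms.L2Operator

/-!
For `u ∈ U`, the sets `W ∩ uU` and `u(W ∩ U)` both lie in `uU`, which has measure `μ(U)`.
Since `U` and `uU` lie in `U² ⊆ V`, each loses less than `μ(V \ W) < μ(U)/2` when intersected
with `W`, so both sets have measure more than `μ(U)/2` and must meet. A common point lies in
`uW ∩ W`, hence `u ∈ WW⁻¹`.
-/

namespace LeftInvariantFAMeasure

variable {G : Type*} [Group G] (μ : LeftInvariantFAMeasure G)

lemma mono {X Y : Set G} (h : X ⊆ Y) : μ.toFun X ≤ μ.toFun Y := by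
  have hsplit := μ.additive X (Y \ X) Set.disjoint_sdiff_right
  rw [Set.union_sdiff_cancel h] at hsplit
  linarith [μ.nonneg (Y \ X)]

lemma union_le (X Y : Set G) : μ.toFun (X ∪ Y) ≤ μ.toFun X + μ.toFun Y := by
  have hsplit := μ.additive X (Y \ X) Set.disjoint_sdiff_right
  rw [Set.union_sdiff_self] at hsplit
  linarith [μ.mono (Set.sdiff_subset : Y \ X ⊆ Y)]

lemma le_inter_add_diff {X V : Set G} (hXV : X ⊆ V) (W : Set G) :
    μ.toFun X ≤ μ.toFun (W ∩ X) + μ.toFun (V \ W) := by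
  have hcover : X ⊆ (W ∩ X) ∪ (V \ W) := fun x hx => by
    by_cases hw : x ∈ W
    · exact Or.inl ⟨hw, hx⟩
    · exact Or.inr ⟨hXV hx, hw⟩
  exact (μ.mono hcover).trans (μ.union_le _ _)

lemma inter_nonempty_of_lt_add {X Y Z : Set G} (hX : X ⊆ Z) (hY : Y ⊆ Z)
    (h : μ.toFun Z < μ.toFun X + μ.toFun Y) : (X ∩ Y).Nonempty := by
  rw [← Set.not_disjoint_iff_nonempty_inter]
  intro hdisj
  have hsum := μ.additive X Y hdisj
  linarith [μ.mono (Set.union_subset hX hY)]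

end LeftInvariantFAMeasure

lemma Set.mem_mul_inv_of_smul_inter_nonempty {G : Type*} [Group G] {W : Set G} {u : G}
    (h : (u • W ∩ W).Nonempty) : u ∈ W * W⁻¹ := by
  obtain ⟨a, b, ⟨ha, hb⟩, rfl⟩ := Set.smul_inter_nonempty_iff.mp h
  exact Set.mul_mem_mul ha (Set.inv_mem_inv.mpr hb)

theorem subset_mul_inv_of_small_diff_general {G : Type*} [Group G]
    (μ : LeftInvariantFAMeasure G) (U V W : Set G)
    (h1 : (1 : G) ∈ U) (hUsq : U * U ⊆ V)
    (hsmall : μ.toFun (V \ W) < μ.toFun U / 2) :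
    U ⊆ W * W⁻¹ := by
  intro u hu
  have hUV : U ⊆ V := fun x hx => hUsq (by simpa using Set.mul_mem_mul hx h1)
  have huUV : u • U ⊆ V := Set.smul_set_subset_iff.mpr fun x hx => hUsq (Set.mul_mem_mul hu hx)
  have hleft : μ.toFun U ≤ μ.toFun (W ∩ u • U) + μ.toFun (V \ W) := by
    simpa only [μ.left_invariant] using μ.le_inter_add_diff huUV W
  have hright : μ.toFun U ≤ μ.toFun (u • (W ∩ U)) + μ.toFun (V \ W) := by
    simpa only [μ.left_invariant] using μ.le_inter_add_diff hUV W
  have hmeet : ((W ∩ u • U) ∩ u • (W ∩ U)).Nonempty := by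
    refine μ.inter_nonempty_of_lt_add Set.inter_subset_right
      (Set.smul_set_mono Set.inter_subset_right) ?_
    rw [μ.left_invariant]
    linarith
  refine Set.mem_mul_inv_of_smul_inter_nonempty (hmeet.mono fun x hx => ⟨?_, hx.1.1⟩)
  exact Set.smul_set_mono Set.inter_subset_left hx.2

/-- Covering lemma: if `1 ∈ U = U⁻¹`, `U² ⊆ V` and `μ(V \ W) < μ(U)/2`,
then `U ⊆ WW⁻¹`. -/
theorem subset_mul_inv_of_small_diff {G : Type*} [Group G]
    (μ : LeftInvariantFAMeasure G) (U V W : Set G)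
    (h1 : (1 : G) ∈ U) (hUinv : U = U⁻¹) (hUsq : U * U ⊆ V)
    (hsmall : μ.toFun (V \ W) < μ.toFun U / 2) :
    U ⊆ W * W⁻¹ :=
  subset_mul_inv_of_small_diff_general μ U V W h1 hUsq hsmall
end

section
/- Let G be a group carrying a left-invariant finitely additive probability measure μ, let α > 0, and let A ⊆ G with μ(A) ≥ α. Suppose U, V, W ⊆ G are such that 1 ∈ U, U = U⁻¹, and U² ⊆ V, and suppose U is m-generic in G for some integer m ≥ 1. If μ(V \ W) < α/m, then AW⁻¹ contains a left translate of U, i.e. there exists g ∈ G with gU ⊆ AW⁻¹. -/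
open scoped Pointwise Matrix.Norms.L2Operator

lemma famMono {G : Type*} [Group G] (μ : LeftInvariantFAMeasure G)
    {X Y : Set G} (h : X ⊆ Y) : μ.toFun X ≤ μ.toFun Y := by
  have hd : Disjoint X (Y \ X) := Set.disjoint_sdiff_right.mono_left le_rfl
  have := μ.additive X (Y \ X) hd
  rw [Set.union_diff_cancel h] at this
  have := μ.nonneg (Y \ X)
  linarith [μ.additive X (Y \ X) hd]

lemma famSubadd {G : Type*} [Group G] (μ : LeftInvariantFAMeasure G)
    (X Y : Set G) : μ.toFun (X ∪ Y) ≤ μ.toFun X + μ.toFun Y := by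
  have hd : Disjoint X (Y \ X) := Set.disjoint_sdiff_right
  have h1 : X ∪ Y = X ∪ (Y \ X) := by simp [Set.union_diff_self]
  rw [h1, μ.additive X (Y \ X) hd]
  have := famMono μ (Set.diff_subset : Y \ X ⊆ Y)
  linarith

lemma famSumUnion {G : Type*} [Group G] (μ : LeftInvariantFAMeasure G)
    (F : Finset G) (S : G → Set G) :
    μ.toFun (⋃ g ∈ F, S g) ≤ ∑ g ∈ F, μ.toFun (S g) := by
  classical
  induction F using Finset.induction with
  | empty =>
      have he : (⋃ g ∈ (∅ : Finset G), S g) = ∅ := by simp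
      rw [he, Finset.sum_empty]
      have h0 : Disjoint (∅ : Set G) (∅ : Set G) := by simp
      have := μ.additive ∅ ∅ h0
      simp only [Set.union_empty] at this
      linarith
  | insert _ _ hx ih =>
      rename_i a s
      rw [Finset.sum_insert hx]
      have : (⋃ g ∈ insert a s, S g) = S a ∪ ⋃ g ∈ s, S g := by
        simp [Set.biUnion_insert]
      rw [this]
      calc μ.toFun (S a ∪ ⋃ g ∈ s, S g) ≤ μ.toFun (S a) + μ.toFun (⋃ g ∈ s, S g) :=
            famSubadd μ _ _
        _ ≤ _ := by linarith

/-- Covering lemma: if `1 ∈ U = U⁻¹`, `U² ⊆ V`, `U` is `m`-generic, `μ(A) ≥ α` and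
`μ(V \ W) < α/m`, then `AW⁻¹` contains a left translate of `U`. -/
theorem translate_subset_of_small_diff {G : Type*} [Group G]
    (μ : LeftInvariantFAMeasure G) (α : ℝ) (hα : 0 < α)
    (A : Set G) (hA : α ≤ μ.toFun A) (U V W : Set G)
    (h1 : (1 : G) ∈ U) (hUinv : U = U⁻¹) (hUsq : U * U ⊆ V)
    (m : ℕ) (hm : 1 ≤ m) (hgen : IsGeneric m U)
    (hsmall : μ.toFun (V \ W) < α / m) :
    ∃ g : G, g • U ⊆ A * W⁻¹ := by
  classical
  obtain ⟨F, hFcard, hFcov⟩ := hgen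
  have hmpos : (0 : ℝ) < m := by exact_mod_cast hm
  -- A is covered by the translates
  have hcov : A ⊆ ⋃ g ∈ F, (A ∩ g • U) := by
    intro x hx
    obtain ⟨g, hgF, hxg⟩ := hFcov x
    exact Set.mem_biUnion hgF ⟨hx, hxg⟩
  have hsum : α ≤ ∑ g ∈ F, μ.toFun (A ∩ g • U) :=
    le_trans hA ((famMono μ hcov).trans (famSumUnion μ F _))
  -- pigeonhole: some translate has large intersection
  have hex : ∃ g ∈ F, α / m ≤ μ.toFun (A ∩ g • U) := by
    by_contra hcon
    push_neg at hcon
    have hFne : F.Nonempty := by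
      obtain ⟨g, hg, _⟩ := hFcov 1
      exact ⟨g, hg⟩
    have : ∑ g ∈ F, μ.toFun (A ∩ g • U) < ∑ g ∈ F, α / m :=
      Finset.sum_lt_sum_of_nonempty hFne fun g hg => hcon g hg
    have h2 : ∑ g ∈ F, α / m ≤ α := by
      rw [Finset.sum_const, nsmul_eq_mul]
      have : (F.card : ℝ) ≤ m := by exact_mod_cast hFcard
      calc (F.card : ℝ) * (α / m) ≤ m * (α / m) := by
            apply mul_le_mul_of_nonneg_right this
            positivity
        _ = α := by field_simp
    linarith
  obtain ⟨g, _, hglarge⟩ := hex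
  refine ⟨g, fun x hx => ?_⟩
  by_contra hxnot
  -- A ∩ g•U ⊆ x • (V \ W)
  obtain ⟨u, huU, hxu⟩ := hx
  have hsubset : A ∩ g • U ⊆ x • (V \ W) := by
    rintro a ⟨haA, u', hu'U, hau'⟩
    simp only [smul_eq_mul] at hxu hau'
    refine ⟨x⁻¹ * a, ⟨?_, ?_⟩, by simp [smul_eq_mul, mul_assoc]⟩
    · apply hUsq
      have hu_inv : u⁻¹ ∈ U := by
        rw [hUinv] at huU
        exact Set.mem_inv.mp huU
      have : x⁻¹ * a = u⁻¹ * u' := by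
        rw [← hxu, ← hau']
        group
      rw [this]
      exact Set.mul_mem_mul hu_inv hu'U
    · intro hW
      apply hxnot
      refine ⟨a, haA, (x⁻¹ * a)⁻¹, Set.inv_mem_inv.mpr hW, by group⟩
  have : μ.toFun (A ∩ g • U) ≤ μ.toFun (x • (V \ W)) := famMono μ hsubset
  rw [μ.left_invariant] at this
  linarith
end

section
/- Let X be a Hausdorff topological space such that every nonempty closed subset A ⊆ X is a retract of X, i.e. there exists a continuous map r : X → A whose restriction to A is the identity. Then X has a basis of clopen sets: for every point x ∈ X and every open set U containing x, there exists a clopen set V with x ∈ V ⊆ U. -/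
/-!
Given `x ∈ U` with `U` open, retract `X` onto the closed set `{x} ∪ Uᶜ` by `r`. The only point of
the image lying in `U` is `x`, so `r ⁻¹' U = r ⁻¹' {x}` is both open and closed; it contains `x`,
and it misses `Uᶜ` because `r` fixes every point there.
-/

open Set

theorem isClopen_preimage_of_range_inter_subset {X Y : Type*} [TopologicalSpace X]
    [TopologicalSpace Y] {f : X → Y} (hf : Continuous f) {U C : Set Y} (hU : IsOpen U)
    (hC : IsClosed C) (hCU : C ⊆ U) (hrange : range f ∩ U ⊆ C) : IsClopen (f ⁻¹' U) := by
  have hpre : f ⁻¹' U = f ⁻¹' C :=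
    Subset.antisymm (fun y hy => hrange ⟨mem_range_self y, hy⟩) (preimage_mono hCU)
  exact ⟨hpre ▸ hC.preimage hf, hU.preimage hf⟩

/-- A Hausdorff space in which every nonempty closed subset is a retract has a basis
of clopen sets. -/
theorem clopen_basis_of_closed_retracts
    {X : Type*} [TopologicalSpace X] [T2Space X]
    (hretr : ∀ A : Set X, A.Nonempty → IsClosed A →
      ∃ r : X → X, Continuous r ∧ Set.range r ⊆ A ∧ ∀ a ∈ A, r a = a) :
    ∀ (x : X) (U : Set X), x ∈ U → IsOpen U →
      ∃ V : Set X, IsClopen V ∧ x ∈ V ∧ V ⊆ U := by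
  intro x U hxU hU
  obtain ⟨r, hr, hrange, hfix⟩ := hretr ({x} ∪ Uᶜ) ⟨x, .inl rfl⟩
    (isClosed_singleton.union hU.isClosed_compl)
  have hrange_inter : range r ∩ U ⊆ {x} := fun y ⟨hy, hyU⟩ =>
    (hrange hy).resolve_right (not_not_intro hyU)
  refine ⟨r ⁻¹' U, isClopen_preimage_of_range_inter_subset hr hU isClosed_singleton
    (singleton_subset_iff.2 hxU) hrange_inter, ?_, fun y hy => ?_⟩
  · rwa [mem_preimage, hfix x (.inl rfl)]
  · by_contra hyU
    exact hyU (hfix y (.inr hyU) ▸ hy)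
end
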